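/- Let V be finite-dimensional and let α, β, γ be Lagrangian subspaces of (V, ω). Then α ∩ (β + γ) ∩ (β ∩ (α + γ))^ω = α ∩ β + α ∩ γ; that is, the kernel of the Hermitian form Q(α,β;γ) equals α ∩ β + α ∩ γ. -/

import Mathlib

open Module Submodule

/-- The annihilator of a subspace `lam` with respect to a sesquilinear form `ω`
(linear in the first variable, conjugate-linear in the second). -/
def symplAnn {V : Type*} [AddCommGroup V] [Module ℂ V]
    (ω : V →ₗ[ℂ] V →ₗ⋆[ℂ] ℂ) (lam : Submodule ℂ V) : Submodule ℂ V where
  carrier := {x | ∀ y ∈ lam, ω x y = 0}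
  add_mem' := by
    intro a b ha hb y hy
    simp [ha y hy, hb y hy]
  zero_mem' := by
    intro y hy
    simp
  smul_mem' := by
    intro c x hx y hy
    simp [hx y hy]

/-!
The annihilator of `β ∩ (α + γ)` is `β^ω + (α + γ)^ω = β + α ∩ γ`, by the double annihilator
theorem and Lagrangianity. As `β + α ∩ γ ≤ β + γ`, the left-hand side is `α ∩ (β + α ∩ γ)`, which
is `α ∩ β + α ∩ γ` by the modular law. The double annihilator theorem is obtained from the one
for the real bilinear form `(x, y) ↦ Re ω(y, x)`, which has the same annihilators.
-/

section

variable {V : Type*} [AddCommGroup V] [Module ℂ V] (ω : V →ₗ[ℂ] V →ₗ⋆[ℂ] ℂ)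

theorem mem_symplAnn {p : Submodule ℂ V} {x : V} : x ∈ symplAnn ω p ↔ ∀ y ∈ p, ω x y = 0 :=
  Iff.rfl

theorem symplAnn_sup (p q : Submodule ℂ V) :
    symplAnn ω (p ⊔ q) = symplAnn ω p ⊓ symplAnn ω q := by
  ext x
  simp only [mem_inf, mem_symplAnn]
  refine ⟨fun h => ⟨fun y hy => h y (mem_sup_left hy), fun y hy => h y (mem_sup_right hy)⟩, ?_⟩
  rintro ⟨hp, hq⟩ y hy
  obtain ⟨a, ha, b, hb, rfl⟩ := mem_sup.mp hy
  simp [hp a ha, hq b hb]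

/-- Testing against `I • y` recovers the imaginary part, since `ω x (I • y) = -I * ω x y`. -/
theorem mem_symplAnn_iff_re {p : Submodule ℂ V} {x : V} :
    x ∈ symplAnn ω p ↔ ∀ y ∈ p, (ω x y).re = 0 := by
  refine ⟨fun h y hy => by simp [h y hy], fun h y hy => Complex.ext (h y hy) ?_⟩
  simpa using h _ (p.smul_mem Complex.I hy)

/-- The arguments are swapped so that `orthogonal` of this form is `symplAnn ω`. -/
noncomputable def symplReForm : LinearMap.BilinForm ℝ V :=
  LinearMap.mk₂ ℝ (fun x y => (ω y x).re)
    (by simp)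
    (fun r x y => by rw [← algebraMap_smul ℂ r x, map_smulₛₗ]; simp)
    (by simp)
    (fun r x y => by simp)

theorem restrictScalars_symplAnn (p : Submodule ℂ V) :
    (symplAnn ω p).restrictScalars ℝ = (symplReForm ω).orthogonal (p.restrictScalars ℝ) := by
  ext x
  exact mem_symplAnn_iff_re ω

variable (hSkew : ∀ x y : V, ω y x = -(starRingEnd ℂ) (ω x y))
  (hNd : ∀ x : V, (∀ y : V, ω x y = 0) → x = 0)

include hSkew in
theorem symplReForm_isRefl : (symplReForm ω).IsRefl := by
  intro x y h
  change (ω x y).re = 0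
  change (ω y x).re = 0 at h
  rwa [hSkew, Complex.neg_re, Complex.conj_re, neg_eq_zero] at h

include hSkew hNd in
theorem symplReForm_nondegenerate : (symplReForm ω).Nondegenerate := by
  refine (symplReForm_isRefl ω hSkew).nondegenerate_iff_separatingRight.mpr fun x h => hNd x ?_
  have hx : x ∈ symplAnn ω ⊤ := (mem_symplAnn_iff_re ω).mpr fun y _ => h y
  exact fun y => hx y trivial

variable [FiniteDimensional ℂ V]
include hSkew hNd

theorem symplAnn_symplAnn (p : Submodule ℂ V) : symplAnn ω (symplAnn ω p) = p := by
  have : FiniteDimensional ℝ V := .trans ℝ ℂ V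
  apply restrictScalars_injective ℝ
  rw [restrictScalars_symplAnn, restrictScalars_symplAnn]
  exact LinearMap.BilinForm.orthogonal_orthogonal (symplReForm_nondegenerate ω hSkew hNd)
    (symplReForm_isRefl ω hSkew) _

theorem symplAnn_inf (p q : Submodule ℂ V) :
    symplAnn ω (p ⊓ q) = symplAnn ω p ⊔ symplAnn ω q := by
  conv_lhs => rw [← symplAnn_symplAnn ω hSkew hNd p, ← symplAnn_symplAnn ω hSkew hNd q,
    ← symplAnn_sup, symplAnn_symplAnn ω hSkew hNd]

end

theorem stmt6 {V : Type*} [AddCommGroup V] [Module ℂ V] [FiniteDimensional ℂ V]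
    (ω : V →ₗ[ℂ] V →ₗ⋆[ℂ] ℂ)
    (hSkew : ∀ x y : V, ω y x = -(starRingEnd ℂ) (ω x y))
    (hNd : ∀ x : V, (∀ y : V, ω x y = 0) → x = 0)
    (α β γ : Submodule ℂ V)
    (hα : α = symplAnn ω α) (hβ : β = symplAnn ω β) (hγ : γ = symplAnn ω γ) :
    α ⊓ (β ⊔ γ) ⊓ symplAnn ω (β ⊓ (α ⊔ γ)) = (α ⊓ β) ⊔ (α ⊓ γ) := by
  have hAnn : symplAnn ω (β ⊓ (α ⊔ γ)) = β ⊔ α ⊓ γ := by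
    rw [symplAnn_inf ω hSkew hNd, symplAnn_sup, ← hα, ← hβ, ← hγ]
  rw [hAnn, inf_assoc, inf_eq_right.mpr (sup_le_sup_left inf_le_right β),
    inf_sup_assoc_of_le β inf_le_left]
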